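/- Suppose M : ℕ → (0,∞) satisfies lim_{N→∞} N(ln ln N)²/(M(N)·ln N) = 0. For θ ∈ (0,π] define η_θ = ((√(3−cos θ) + √(1−cos θ))/√2)² and F_N(θ) = −2(1 − η_θ^{−4M(N)})·(1 + cos θ)·(3 − cos θ)^{−1/2}·(1 − cos θ)^{−1/2} / [ 1 + η_θ^{−4M(N)} + (1 − η_θ^{−4M(N)})·√2·(1 − cos θ)^{1/2}·(3 − cos θ)^{−1/2} ]. Then lim_{N→∞} (1/√(4M(N)·N·ln N)) · [ ∑_{n=1}^{N} F_N(θ_n) + (4/π)·N·ln N ] = 0, where θ_n = π(2n−1)/(2N). -/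

import Mathlib

open Filter Finset

/-- `η_θ = ((√(3−cos θ) + √(1−cos θ))/√2)²`; equals `e^{γ_θ(β_c)}`. -/
noncomputable def eta (θ : ℝ) : ℝ :=
  ((Real.sqrt (3 - Real.cos θ) + Real.sqrt (1 - Real.cos θ)) / Real.sqrt 2) ^ 2

/-- `F_N(θ)`, the derivative at `β = β_c` of
`f_θ(β) = ln[1 + e^{−4Mγ_θ(β)} + (1 − e^{−4Mγ_θ(β)})g_θ(β)] − ln 2`; here `m = M(N)`. -/
noncomputable def FN (m θ : ℝ) : ℝ :=
  -2 * (1 - eta θ ^ (-(4 * m))) * (1 + Real.cos θ) *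
      (Real.sqrt (3 - Real.cos θ))⁻¹ * (Real.sqrt (1 - Real.cos θ))⁻¹ /
    (1 + eta θ ^ (-(4 * m)) +
      (1 - eta θ ^ (-(4 * m))) * Real.sqrt 2 * Real.sqrt (1 - Real.cos θ) *
        (Real.sqrt (3 - Real.cos θ))⁻¹)

/-!
In the half-angle variable `s = sin (θ / 2)` the square roots in `FN` become `√2 s` and
`√2 √(1 + s²)`, and `x = η_θ^{-4m}` enters only through `FNsin x s`. Comparing with the limit
profile `FNinf` (`x = 0`) gives `0 ≤ FN m θ - FNinf θ ≤ (4π/θ) η_θ^{-4m}`, while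
`FNinf θ = -4/θ + O(1)`. Over the nodes `θ_n`, `∑ 4/θ_n = (8N/π) ∑ 1/(2n-1) = (4/π) N ln N + O(N)`
and the `O(1)` terms add up to `O(N)`. Since `η_θ ≥ 1 + 2θ/π`, Bernoulli's inequality bounds
`η_θ^{-4m}` by `π/(8mθ)`, so the comparison error is `O(N (1 + ln (N/m)))`, which is
`O(N ln ln N)` as soon as `N/m < ln N`. After division by `√(4 m N ln N)` what is left is
`O(√(N (ln ln N)² / (m ln N)))`, which tends to `0` by hypothesis.
-/

open Real

section HalfAngle

variable {θ : ℝ}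

lemma cos_eq_one_sub_two_mul_sin_half_sq (θ : ℝ) : cos θ = 1 - 2 * sin (θ / 2) ^ 2 := by
  rw [← cos_two_mul_eq_one_sub, mul_div_cancel₀ θ two_ne_zero]

lemma sqrt_one_sub_cos (h : 0 ≤ sin (θ / 2)) : √(1 - cos θ) = √2 * sin (θ / 2) := by
  rw [cos_eq_one_sub_two_mul_sin_half_sq, sub_sub_cancel, sqrt_mul zero_le_two, sqrt_sq h]

lemma sqrt_three_sub_cos (θ : ℝ) : √(3 - cos θ) = √2 * √(1 + sin (θ / 2) ^ 2) := by
  rw [cos_eq_one_sub_two_mul_sin_half_sq, ← sqrt_mul zero_le_two]; ring_nf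

lemma sin_half_pos (h0 : 0 < θ) (hπ : θ ≤ π) : 0 < sin (θ / 2) :=
  sin_pos_of_pos_of_lt_pi (by linarith) (by linarith [pi_pos])

lemma div_pi_le_sin_half (h0 : 0 ≤ θ) (hπ : θ ≤ π) : θ / π ≤ sin (θ / 2) := by
  have := mul_le_sin (x := θ / 2) (by linarith) (by linarith)
  rwa [div_mul_div_comm, mul_comm π 2, mul_div_mul_left _ _ two_ne_zero] at this

lemma eta_eq (h : 0 ≤ sin (θ / 2)) : eta θ = (√(1 + sin (θ / 2) ^ 2) + sin (θ / 2)) ^ 2 := by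
  rw [eta, sqrt_one_sub_cos h, sqrt_three_sub_cos, ← mul_add,
    mul_div_cancel_left₀ _ (sqrt_ne_zero'.2 two_pos)]

lemma one_add_le_eta (h0 : 0 ≤ θ) (hπ : θ ≤ π) : 1 + 2 * (θ / π) ≤ eta θ := by
  have hs := div_pi_le_sin_half h0 hπ
  have hs0 : 0 ≤ sin (θ / 2) := (div_nonneg h0 pi_pos.le).trans hs
  have hw : 1 ≤ √(1 + sin (θ / 2) ^ 2) := one_le_sqrt.2 (by nlinarith)
  rw [eta_eq hs0]
  nlinarith

end HalfAngle

lemma rpow_neg_le_min_inv {y p : ℝ} (hy : 0 < y) (hp : 1 ≤ p) :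
    (1 + y) ^ (-p) ≤ min 1 (p * y)⁻¹ := by
  have hB : 1 + p * y ≤ (1 + y) ^ p := one_add_mul_self_le_rpow_one_add (by linarith) hp
  rw [rpow_neg (by linarith)]
  exact le_min (inv_le_one_of_one_le₀ (by nlinarith)) (inv_anti₀ (by positivity) (by linarith))

/-- `FN` in the variables `x = η_θ^{-4m}` and `s = sin (θ / 2)`. -/
noncomputable def FNsin (x s : ℝ) : ℝ :=
  -2 * (1 - x) * (1 - s ^ 2) / (s * (√(1 + s ^ 2) * (1 + x) + √2 * (1 - x) * s))

lemma FN_eq_FNsin (m : ℝ) {θ : ℝ} (h0 : 0 < θ) (hπ : θ ≤ π) :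
    FN m θ = FNsin (eta θ ^ (-(4 * m))) (sin (θ / 2)) := by
  have hs := sin_half_pos h0 hπ
  have hw : 0 < √(1 + sin (θ / 2) ^ 2) := sqrt_pos.2 (by positivity)
  have h2 : (0 : ℝ) < √2 := by positivity
  have hc : 1 + cos θ = 2 * (1 - sin (θ / 2) ^ 2) := by
    rw [cos_eq_one_sub_two_mul_sin_half_sq]; ring
  rw [FN, FNsin, sqrt_one_sub_cos hs.le, sqrt_three_sub_cos, hc]
  generalize eta θ ^ (-(4 * m)) = x
  generalize sin (θ / 2) = s at *
  field_simp
  rw [sq_sqrt zero_le_two]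
  ring

lemma FNsin_sub_FNsin_zero {x s : ℝ} (hx0 : 0 ≤ x) (hx1 : x ≤ 1) (hs0 : 0 < s) (hs1 : s ≤ 1) :
    0 ≤ FNsin x s - FNsin 0 s ∧ FNsin x s - FNsin 0 s ≤ 4 * x / s := by
  have hw : 1 ≤ √(1 + s ^ 2) := one_le_sqrt.2 (by nlinarith)
  have h2 : (0 : ℝ) < √2 := by positivity
  rw [FNsin, FNsin]
  simp only [sub_zero, add_zero, mul_one]
  set w := √(1 + s ^ 2)
  set D := w * (1 + x) + √2 * (1 - x) * s
  set E := w + √2 * s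
  have hD : w ≤ D := by nlinarith [mul_nonneg h2.le hs0.le]
  have hE : w ≤ E := by nlinarith
  have key : -2 * (1 - x) * (1 - s ^ 2) / (s * D) - -2 * (1 - s ^ 2) / (s * E) =
      4 * x * w * (1 - s ^ 2) / (s * (D * E)) := by
    have : D ≠ 0 := by linarith
    have : E ≠ 0 := by linarith
    field_simp
    ring
  have hs2 : 0 ≤ 1 - s ^ 2 := by nlinarith
  have hDE : w ≤ D * E := by nlinarith
  rw [key]
  constructor
  · positivity
  · calc 4 * x * w * (1 - s ^ 2) / (s * (D * E)) ≤ 4 * x * w / (s * w) := by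
          refine div_le_div₀ (by positivity) ?_ (by positivity) (by gcongr)
          have : 0 ≤ x * w := by positivity
          nlinarith
      _ = 4 * x / s := by field_simp

lemma FNsin_zero_add_two_div {s : ℝ} (hs0 : 0 < s) (hs1 : s ≤ 1) :
    0 ≤ FNsin 0 s + 2 / s ∧ FNsin 0 s + 2 / s ≤ 6 := by
  have hw1 : 1 ≤ √(1 + s ^ 2) := one_le_sqrt.2 (by nlinarith)
  have hw2 : √(1 + s ^ 2) ≤ 1 + s ^ 2 / 2 := sqrt_le_iff.2 ⟨by positivity, by nlinarith⟩
  have h2 : √2 ≤ 3 / 2 := sqrt_le_iff.2 ⟨by norm_num, by norm_num⟩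
  have h2' : (0 : ℝ) < √2 := by positivity
  have key : FNsin 0 s + 2 / s =
      2 * (√(1 + s ^ 2) - 1 + s ^ 2 + √2 * s) / (s * (√(1 + s ^ 2) + √2 * s)) := by
    rw [FNsin]
    field_simp
    ring
  rw [key]
  constructor
  · positivity
  · rw [div_le_iff₀ (by positivity)]
    nlinarith [mul_le_mul_of_nonneg_left h2 hs0.le]

lemma inv_sin_sub_inv_le {t : ℝ} (h0 : 0 < t) (h1 : t ≤ π / 2) : (sin t)⁻¹ - t⁻¹ ≤ 1 / 2 := by
  have hsin : 2 / π * t ≤ sin t := mul_le_sin h0.le h1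
  have hcube := sin_ge_sub_cube h0.le
  have hpi : π ^ 2 ≤ 12 := by nlinarith [pi_lt_d2]
  have hπ := pi_pos
  have hs : 0 < sin t := lt_of_lt_of_le (by positivity) hsin
  rw [inv_sub_inv hs.ne' h0.ne', div_le_iff₀ (by positivity)]
  have hsin' : 2 * t ^ 2 ≤ π * (t * sin t) := by
    have := mul_le_mul_of_nonneg_left hsin (by positivity : 0 ≤ π * t)
    field_simp at this
    nlinarith
  have ht : t * π ≤ 6 := by nlinarith
  refine le_of_mul_le_mul_left ?_ hπ
  nlinarith [mul_le_mul_of_nonneg_left ht (sq_nonneg t)]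

noncomputable def FNinf (θ : ℝ) : ℝ := FNsin 0 (sin (θ / 2))

lemma abs_FNinf_add_le {θ : ℝ} (h0 : 0 < θ) (hπ : θ ≤ π) : |FNinf θ + 4 / θ| ≤ 6 := by
  have hs := sin_half_pos h0 hπ
  obtain ⟨hF0, hF6⟩ := FNsin_zero_add_two_div hs (sin_le_one _)
  have hsin_lt := sin_lt (half_pos h0)
  have hinv := inv_sin_sub_inv_le (half_pos h0) (by linarith)
  have hinv0 : (θ / 2)⁻¹ ≤ (sin (θ / 2))⁻¹ := inv_anti₀ hs hsin_lt.le
  have : FNinf θ + 4 / θ = (FNsin 0 (sin (θ / 2)) + 2 / sin (θ / 2))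
      - 2 * ((sin (θ / 2))⁻¹ - (θ / 2)⁻¹) := by
    rw [FNinf]; field_simp; ring
  rw [this, abs_le]
  constructor <;> linarith

lemma eta_rpow_neg_le {m θ : ℝ} (hm : 1 ≤ 4 * m) (h0 : 0 < θ) (hπ : θ ≤ π) :
    eta θ ^ (-(4 * m)) ≤ min 1 (π / (8 * m * θ)) := by
  have hy : 0 < 2 * (θ / π) := by have := pi_pos; positivity
  calc eta θ ^ (-(4 * m)) ≤ (1 + 2 * (θ / π)) ^ (-(4 * m)) :=
        rpow_le_rpow_of_nonpos (by linarith) (one_add_le_eta h0.le hπ) (by linarith)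
    _ ≤ min 1 (4 * m * (2 * (θ / π)))⁻¹ := rpow_neg_le_min_inv hy hm
    _ = min 1 (π / (8 * m * θ)) := by
        congr 1; field_simp; ring

lemma FN_sub_FNinf {m θ : ℝ} (hm : 1 ≤ 4 * m) (h0 : 0 < θ) (hπ : θ ≤ π) :
    0 ≤ FN m θ - FNinf θ ∧ FN m θ - FNinf θ ≤ 4 * π / θ * min 1 (π / (8 * m * θ)) := by
  have hs := sin_half_pos h0 hπ
  have hπ0 := pi_pos
  have hη : 1 ≤ eta θ :=
    (le_add_of_nonneg_right (by positivity)).trans (one_add_le_eta h0.le hπ)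
  obtain ⟨hlow, hup⟩ := FNsin_sub_FNsin_zero (rpow_nonneg (zero_le_one.trans hη) _)
    (rpow_le_one_of_one_le_of_nonpos hη (by linarith : -(4 * m) ≤ 0)) hs (sin_le_one _)
  rw [FN_eq_FNsin m h0 hπ, FNinf]
  refine ⟨hlow, hup.trans ?_⟩
  have hinv : (sin (θ / 2))⁻¹ ≤ π / θ := by
    rw [← inv_div θ π]; exact inv_anti₀ (by positivity) (div_pi_le_sin_half h0.le hπ)
  have hm0 : 0 < m := by linarith
  have hmin : 0 ≤ min 1 (π / (8 * m * θ)) := le_min zero_le_one (by positivity)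
  calc 4 * eta θ ^ (-(4 * m)) / sin (θ / 2)
        = 4 * (eta θ ^ (-(4 * m)) * (sin (θ / 2))⁻¹) := by ring
    _ ≤ 4 * (min 1 (π / (8 * m * θ)) * (π / θ)) := by
        gcongr 4 * ?_
        exact mul_le_mul (eta_rpow_neg_le hm h0 hπ) hinv (by positivity) hmin
    _ = 4 * π / θ * min 1 (π / (8 * m * θ)) := by ring

lemma sum_Icc_inv_two_mul_sub_one (N : ℕ) :
    ∑ n ∈ Icc 1 N, (2 * (n : ℝ) - 1)⁻¹ = harmonic (2 * N) - harmonic N / 2 := by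
  induction N with
  | zero => simp
  | succ N ih =>
    rw [sum_Icc_succ_top (by omega), ih, show 2 * (N + 1) = 2 * N + 1 + 1 by ring,
      harmonic_succ, harmonic_succ, harmonic_succ]
    push_cast
    have : 2 * ((N : ℝ) + 1) - 1 ≠ 0 := by linarith [(N.cast_nonneg : (0 : ℝ) ≤ N)]
    field_simp
    ring

lemma abs_sum_Icc_inv_two_mul_sub_one_sub_le (N : ℕ) :
    |∑ n ∈ Icc 1 N, (2 * (n : ℝ) - 1)⁻¹ - log N / 2| ≤ 2 := by
  rcases N.eq_zero_or_pos with rfl | hN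
  · simp
  have hN0 : (0 : ℝ) < N := by exact_mod_cast hN
  have h2N := harmonic_le_one_add_log (2 * N)
  have h2N' := log_add_one_le_harmonic (2 * N)
  have hN1 := harmonic_le_one_add_log N
  have hN1' := log_add_one_le_harmonic N
  push_cast at h2N h2N' hN1'
  rw [log_mul two_ne_zero hN0.ne'] at h2N
  have hl1 : log N ≤ log (N + 1) := log_le_log hN0 (by linarith)
  have hl2 : log N ≤ log (2 * N + 1) := log_le_log hN0 (by linarith)
  have hl3 : log 2 ≤ 1 := by linarith [log_le_sub_one_of_pos (two_pos : (0 : ℝ) < 2)]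
  rw [sum_Icc_inv_two_mul_sub_one, abs_le]
  constructor <;> linarith

lemma sum_Icc_inv_mul_min_le {c : ℝ} (hc : 0 ≤ c) (N K : ℕ) :
    ∑ n ∈ Icc 1 N, (2 * (n : ℝ) - 1)⁻¹ * min 1 (c * (2 * (n : ℝ) - 1)⁻¹)
      ≤ 1 + log K + 2 * c / (K + 1) := by
  have hodd : ∀ n ∈ Icc 1 N, 0 < 2 * (n : ℝ) - 1 ∧ (2 * (n : ℝ) - 1)⁻¹ ≤ (n : ℝ)⁻¹ := by
    intro n hn
    have : (1 : ℝ) ≤ n := by exact_mod_cast (mem_Icc.1 hn).1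
    exact ⟨by linarith, inv_anti₀ (by linarith) (by linarith)⟩
  rw [← sum_filter_add_sum_filter_not (Icc 1 N) (· ≤ K)]
  gcongr ?_ + ?_
  · calc _ ≤ ∑ n ∈ (Icc 1 N).filter (· ≤ K), (n : ℝ)⁻¹ := by
          refine sum_le_sum fun n hn => ?_
          obtain ⟨h0, h1⟩ := hodd n (mem_filter.1 hn).1
          exact (mul_le_of_le_one_right (by positivity) (min_le_left _ _)).trans h1
      _ ≤ ∑ n ∈ Icc 1 K, (n : ℝ)⁻¹ := by
          refine sum_le_sum_of_subset_of_nonneg (fun n hn => ?_) (fun _ _ _ => by positivity)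
          simp only [mem_filter, mem_Icc] at hn ⊢
          omega
      _ = harmonic K := by rw [harmonic_eq_sum_Icc]; push_cast; rfl
      _ ≤ 1 + log K := harmonic_le_one_add_log K
  · calc _ ≤ ∑ n ∈ (Icc 1 N).filter (¬ · ≤ K), c * ((n : ℝ) ^ 2)⁻¹ := by
          refine sum_le_sum fun n hn => ?_
          obtain ⟨h0, h1⟩ := hodd n (mem_filter.1 hn).1
          calc _ ≤ (2 * (n : ℝ) - 1)⁻¹ * (c * (2 * (n : ℝ) - 1)⁻¹) := by
                gcongr; exact min_le_right _ _
            _ = c * (2 * (n : ℝ) - 1)⁻¹ ^ 2 := by ring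
            _ ≤ c * ((n : ℝ) ^ 2)⁻¹ := by rw [← inv_pow]; gcongr
      _ ≤ ∑ n ∈ Ioo K (N + 1), c * ((n : ℝ) ^ 2)⁻¹ := by
          refine sum_le_sum_of_subset_of_nonneg (fun n hn => ?_) (fun _ _ _ => by positivity)
          simp only [mem_filter, mem_Icc, mem_Ioo] at hn ⊢
          omega
      _ ≤ c * (2 / (K + 1)) := by rw [← mul_sum]; gcongr; exact sum_Ioo_inv_sq_le K (N + 1)
      _ = 2 * c / (K + 1) := by ring

noncomputable def theta (N n : ℕ) : ℝ := π * (2 * (n : ℝ) - 1) / (2 * N)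

section Nodes

variable {N n : ℕ}

lemma two_mul_sub_one_pos (hn : n ∈ Icc 1 N) : (0 : ℝ) < 2 * n - 1 := by
  have : (1 : ℝ) ≤ n := by exact_mod_cast (mem_Icc.1 hn).1
  linarith

lemma natCast_pos_of_mem_Icc (hn : n ∈ Icc 1 N) : (0 : ℝ) < N := by
  have := mem_Icc.1 hn
  exact_mod_cast (show 0 < N by omega)

lemma theta_pos_and_le_pi (hn : n ∈ Icc 1 N) : 0 < theta N n ∧ theta N n ≤ π := by
  have h := two_mul_sub_one_pos hn
  have hN := natCast_pos_of_mem_Icc hn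
  have hnN : (n : ℝ) ≤ N := by exact_mod_cast (mem_Icc.1 hn).2
  have hπ := pi_pos
  unfold theta
  refine ⟨by positivity, ?_⟩
  rw [div_le_iff₀ (by positivity)]
  nlinarith

lemma four_div_theta (hn : n ∈ Icc 1 N) : 4 / theta N n = 8 * N / π * (2 * (n : ℝ) - 1)⁻¹ := by
  have := two_mul_sub_one_pos hn
  have := natCast_pos_of_mem_Icc hn
  unfold theta; field_simp; norm_num

end Nodes

lemma sum_FN_sub_FNinf_le {m : ℝ} (hm : 1 ≤ 4 * m) (N K : ℕ) :
    ∑ n ∈ Icc 1 N, (FN m (theta N n) - FNinf (theta N n))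
      ≤ 8 * N * (1 + log K + N / (2 * m * (K + 1))) := by
  have hm0 : 0 < m := by linarith
  calc _ ≤ ∑ n ∈ Icc 1 N,
        8 * N * ((2 * (n : ℝ) - 1)⁻¹ * min 1 (N / (4 * m) * (2 * (n : ℝ) - 1)⁻¹)) := by
        refine sum_le_sum fun n hn => ?_
        obtain ⟨h0, hπ⟩ := theta_pos_and_le_pi hn
        have h := two_mul_sub_one_pos hn
        have := natCast_pos_of_mem_Icc hn
        have e1 : 4 * π / theta N n = 8 * N * (2 * (n : ℝ) - 1)⁻¹ := by
          unfold theta; field_simp; ring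
        have e2 : π / (8 * m * theta N n) = N / (4 * m) * (2 * (n : ℝ) - 1)⁻¹ := by
          unfold theta; field_simp; ring
        refine (FN_sub_FNinf hm h0 hπ).2.trans_eq ?_
        rw [e1, e2]; ring
    _ = 8 * N * ∑ n ∈ Icc 1 N,
          (2 * (n : ℝ) - 1)⁻¹ * min 1 (N / (4 * m) * (2 * (n : ℝ) - 1)⁻¹) := (mul_sum _ _ _).symm
    _ ≤ 8 * N * (1 + log K + 2 * (N / (4 * m)) / (K + 1)) := by
        gcongr; exact sum_Icc_inv_mul_min_le (by positivity) N K
    _ = 8 * N * (1 + log K + N / (2 * m * (K + 1))) := by field_simp; ring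

lemma abs_sum_FN_add_le {m : ℝ} (hm : 1 ≤ 4 * m) (N K : ℕ) :
    |∑ n ∈ Icc 1 N, FN m (theta N n) + 4 / π * N * log N|
      ≤ 8 * N * (log K + N / (2 * m * (K + 1))) + 20 * N := by
  have hπ := pi_gt_three
  have hlogK : 0 ≤ log K := log_natCast_nonneg K
  have hm0 : 0 < m := by linarith
  have hr : 0 ≤ (N : ℝ) / (2 * m * (K + 1)) := by positivity
  have hdiff := sum_FN_sub_FNinf_le hm N K
  have hdiff0 : 0 ≤ ∑ n ∈ Icc 1 N, (FN m (theta N n) - FNinf (theta N n)) :=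
    sum_nonneg fun n hn =>
      (FN_sub_FNinf hm (theta_pos_and_le_pi hn).1 (theta_pos_and_le_pi hn).2).1
  have hinf : |∑ n ∈ Icc 1 N, (FNinf (theta N n) + 4 / theta N n)| ≤ 6 * N := by
    calc _ ≤ ∑ n ∈ Icc 1 N, |FNinf (theta N n) + 4 / theta N n| := abs_sum_le_sum_abs _ _
      _ ≤ ∑ _n ∈ Icc 1 N, (6 : ℝ) := sum_le_sum fun n hn =>
          abs_FNinf_add_le (theta_pos_and_le_pi hn).1 (theta_pos_and_le_pi hn).2
      _ = 6 * N := by simp [mul_comm]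
  have hodd : |8 * N / π * (∑ n ∈ Icc 1 N, (2 * (n : ℝ) - 1)⁻¹ - log N / 2)| ≤ 6 * N := by
    rw [abs_mul, abs_of_nonneg (by positivity)]
    calc _ ≤ 8 * N / π * 2 := by gcongr; exact abs_sum_Icc_inv_two_mul_sub_one_sub_le N
      _ ≤ 6 * N := by rw [div_mul_eq_mul_div, div_le_iff₀ (by positivity)]; nlinarith
  have hsplit : ∑ n ∈ Icc 1 N, FN m (theta N n) + 4 / π * N * log N =
      ∑ n ∈ Icc 1 N, (FN m (theta N n) - FNinf (theta N n))
        + ∑ n ∈ Icc 1 N, (FNinf (theta N n) + 4 / theta N n)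
        - 8 * N / π * (∑ n ∈ Icc 1 N, (2 * (n : ℝ) - 1)⁻¹ - log N / 2) := by
    have h4 : ∑ n ∈ Icc 1 N, 4 / theta N n =
        8 * N / π * ∑ n ∈ Icc 1 N, (2 * (n : ℝ) - 1)⁻¹ := by
      rw [mul_sum]; exact sum_congr rfl fun n hn => four_div_theta hn
    simp only [sum_sub_distrib, sum_add_distrib]
    rw [mul_sub, ← h4]
    ring
  rw [hsplit, abs_le]
  rw [abs_le] at hinf hodd
  constructor <;> nlinarith

lemma norm_scaled_sum_FN_add_le {N : ℕ} {m : ℝ} (hm : 0 < m) (hLL : 1 ≤ log (log N))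
    (h1 : N * log (log N) ^ 2 / (m * log N) < 1) :
    ‖1 / √(4 * m * N * log N) * (∑ n ∈ Icc 1 N, FN m (theta N n) + 4 / π * N * log N)‖
      ≤ 16 * √(N * log (log N) ^ 2 / (m * log N)) := by
  have hlog : 0 < log N := by
    refine (log_natCast_nonneg N).lt_of_ne fun h => ?_
    rw [← h, log_zero] at hLL
    linarith
  set L := log (log N)
  have hN : N * L ^ 2 < m * log N := by rwa [div_lt_one (by positivity)] at h1
  have hNL : (N : ℝ) ≤ N * L ^ 2 := le_mul_of_one_le_right (by positivity) (by nlinarith)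
  have hm4 : 1 ≤ 4 * m := by
    have := log_le_self (N.cast_nonneg : (0 : ℝ) ≤ N)
    nlinarith
  have hNm : (N : ℝ) / m < log N := by rw [div_lt_iff₀ hm]; linarith
  set K := ⌊(N : ℝ) / m⌋₊
  have hK : (N : ℝ) / (2 * m * (K + 1)) ≤ 1 / 2 := by
    have := Nat.lt_floor_add_one ((N : ℝ) / m)
    rw [div_lt_iff₀ hm] at this
    rw [div_le_iff₀ (by positivity)]
    nlinarith
  have hlogK : log K ≤ L := by
    rcases K.eq_zero_or_pos with h | h
    · rw [h, Nat.cast_zero, log_zero]; linarith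
    · exact log_le_log (by exact_mod_cast h) ((Nat.floor_le (by positivity)).trans hNm.le)
  have hsum : |∑ n ∈ Icc 1 N, FN m (theta N n) + 4 / π * N * log N| ≤ 32 * N * L := by
    have := abs_sum_FN_add_le hm4 N K
    have : (0 : ℝ) ≤ N := N.cast_nonneg
    nlinarith
  have hsqrt : √(N * L ^ 2 / (m * log N)) = 2 * N * L / √(4 * m * N * log N) := by
    rw [← sqrt_sq (by positivity : 0 ≤ 2 * N * L), ← sqrt_div' _ (by positivity)]
    have hN0 : (N : ℝ) ≠ 0 := by rintro h; rw [h, log_zero] at hlog; exact hlog.false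
    congr 1
    field_simp
    ring
  rw [norm_mul, norm_div, norm_one, norm_of_nonneg (sqrt_nonneg _), hsqrt, Real.norm_eq_abs]
  calc 1 / √(4 * m * N * log N) * |∑ n ∈ Icc 1 N, FN m (theta N n) + 4 / π * N * log N|
      ≤ 1 / √(4 * m * N * log N) * (32 * N * L) := by gcongr
    _ = 16 * (2 * N * L / √(4 * m * N * log N)) := by ring

/-- Suppose `M : ℕ → (0,∞)` satisfies `N(ln ln N)²/(M(N)·ln N) → 0`. Then
`(1/√(4M(N)N ln N))·[∑_{n=1}^{N} F_N(θ_n) + (4/π)N ln N] → 0` as `N → ∞`, where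
`θ_n = π(2n−1)/(2N)`. -/
theorem stmt17 (M : ℕ → ℝ) (hMpos : ∀ N, 0 < M N)
    (hM : Tendsto (fun N : ℕ =>
        (N : ℝ) * (Real.log (Real.log N)) ^ 2 / (M N * Real.log N)) atTop (nhds 0)) :
    Tendsto (fun N : ℕ =>
        (1 / Real.sqrt (4 * M N * N * Real.log N)) *
          ((∑ n ∈ Finset.Icc 1 N, FN (M N) (Real.pi * (2 * (n : ℝ) - 1) / (2 * N)))
            + (4 / Real.pi) * N * Real.log N))
      atTop (nhds 0) := by
  have hbound : Tendsto (fun N : ℕ =>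
      16 * √((N : ℝ) * log (log N) ^ 2 / (M N * log N))) atTop (nhds 0) := by
    simpa using hM.sqrt.const_mul 16
  have hLL : ∀ᶠ N : ℕ in atTop, 1 ≤ log (log N) :=
    (tendsto_log_atTop.comp (tendsto_log_atTop.comp tendsto_natCast_atTop_atTop)).eventually
      (eventually_ge_atTop 1)
  refine squeeze_zero_norm' ?_ hbound
  filter_upwards [hLL, hM.eventually (gt_mem_nhds one_pos)] with N hLL h1
  exact norm_scaled_sum_FN_add_le (hMpos N) hLL h1
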